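/- Let V be a finite-dimensional complex vector space equipped with a nondegenerate skew-symmetric bilinear form ω. If f is an odd natural number, then the space of Sp(V)-invariant tensors in (V*)^{⊗ f} is zero; in particular any nonzero invariant multilinear form on V^f forces f to be even. -/
import Mathlib

/-- Sp(V)-invariant tensors in (V*)^{⊗ f} vanish when f is odd. -/
theorem sp_invariants_vanish_odd
    (V : Type*) [AddCommGroup V] [Module ℂ V] [FiniteDimensional ℂ V]
    (ω : V →ₗ[ℂ] V →ₗ[ℂ] ℂ)
    (halt : ∀ v : V, ω v v = 0)
    (hnondeg : ∀ v : V, (∀ w : V, ω v w = 0) → v = 0)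
    (f : ℕ) (hf : Odd f)
    (T : MultilinearMap ℂ (fun _ : Fin f => V) ℂ)
    (hinv : ∀ g : V ≃ₗ[ℂ] V, (∀ x y : V, ω (g x) (g y) = ω x y) →
      ∀ v : Fin f → V, T (fun i => g (v i)) = T v) :
    T = 0 := by
  ext v
  have h := hinv (LinearEquiv.neg ℂ) (by intro x y; simp) v
  have h2 : T (fun i => -(v i)) = T v := h
  have h3 : T (fun i => ((-1 : ℂ) • v i)) = ((-1 : ℂ) ^ f) • T v := by
    rw [T.map_smul_univ]
    simp
  rw [hf.neg_one_pow] at h3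
  simp only [neg_one_smul, neg_smul, one_smul] at h3
  have h4 : T v = - T v := h2.symm.trans h3
  simpa using add_self_eq_zero.mp (eq_neg_iff_add_eq_zero.mp h4)
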